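/- arXiv:1902.02044 — 6 statements merged into one kernel-verified Lean document; each statement's English description precedes it below -/
import Mathlib

section
/- Let H be any graph with m vertices, and let μ_2, …, μ_m be its Laplacian eigenvalues after removing one copy of the eigenvalue 0 (which occurs with the all-ones eigenvector). Then the characteristic polynomial of the Laplacian of [S(K_{1,m})]_{H}, namely of the block matrix [[D(K_{1,m}), −B(K_{1,m})],[−B(K_{1,m})ᵀ, L(H) + 2·I_m]], equals x·(x² − (m+3)x + 2m + 1) · ∏_{i=2}^{m} ( x² − (μ_i + 3)x + μ_i + 1 ). -/
open Matrix SimpleGraph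

/-- The $(m+1)\times m$ vertex–edge incidence matrix of the star $K_{1,m}$,
with the center listed first: edge $j$ joins the center to leaf $j$. -/
def starB (m : ℕ) : Matrix (Fin (m + 1)) (Fin m) ℝ :=
  Matrix.of fun i j => if i = 0 ∨ i = j.succ then 1 else 0

/-- The degree matrix of the star $K_{1,m}$: `diag (m, 1, …, 1)`. -/
def starD (m : ℕ) : Matrix (Fin (m + 1)) (Fin (m + 1)) ℝ :=
  Matrix.diagonal (fun i => if i = 0 then (m : ℝ) else 1)

/-- The orthogonal matrix `1 ⊕ V` where rows of `V` are the eigenvectors `v i`. -/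
def Wmat (m : ℕ) (v : Fin m → Fin m → ℝ) : Matrix (Fin (m + 1)) (Fin (m + 1)) ℝ :=
  Matrix.of (Fin.cons (fun k => if k = 0 then (1 : ℝ) else 0) (fun i => Fin.cons 0 (v i)))

/-- The conjugated incidence block: `√m` in the corner, shifted identity below. -/
noncomputable def BdMat (m : ℕ) : Matrix (Fin (m + 1)) (Fin m) ℝ :=
  Matrix.of fun i k =>
    if i = 0 then (if k.val = 0 then Real.sqrt m else 0)
    else if i = Fin.succ k then 1 else 0

/-- The conjugated matrix. -/
noncomputable def Nmat (m : ℕ) (μ : Fin m → ℝ) (x : ℝ) :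
    Matrix (Fin (m + 1) ⊕ Fin m) (Fin (m + 1) ⊕ Fin m) ℝ :=
  Matrix.fromBlocks (x • 1 - starD m) (BdMat m) (BdMat m)ᵀ
    (x • 1 - (Matrix.diagonal μ + (2 : ℝ) • 1))

/-- Block index function. -/
def bidx (m : ℕ) (hm : 0 < m) : Fin (m + 1) ⊕ Fin m → Fin m :=
  Sum.elim (fun i => ⟨i.val - 1, by have := i.isLt; omega⟩) id

/-- The `Fin 2` indexing of a generic block. -/
def eqv2 (m : ℕ) (hm : 0 < m) (k : Fin m) (hk : k ≠ ⟨0, hm⟩) :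
    Fin 2 ≃ { a : Fin (m + 1) ⊕ Fin m // bidx m hm a = k } where
  toFun c :=
    if c = 0 then ⟨Sum.inl k.succ, by simp [bidx]⟩ else ⟨Sum.inr k, rfl⟩
  invFun p := match p with
    | ⟨Sum.inl _, _⟩ => 0
    | ⟨Sum.inr _, _⟩ => 1
  left_inv := by
    intro c
    fin_cases c <;> rfl
  right_inv := by
    have hkv : k.val ≠ 0 := fun h => hk (Fin.ext h)
    rintro ⟨(i | j), h⟩
    · have h' := h
      simp only [bidx, Sum.elim_inl, Fin.ext_iff] at h'
      have hi : i = Fin.succ k := Fin.ext (by have := i.isLt; simp only [Fin.val_succ]; omega)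
      subst hi
      exact Subtype.ext rfl
    · have h' := h
      simp only [bidx, Sum.elim_inr, id] at h'
      subst h'
      exact Subtype.ext rfl

/-- The `Fin 3` indexing of the exceptional block. -/
def eqv3 (m : ℕ) (hm : 0 < m) :
    Fin 3 ≃ { a : Fin (m + 1) ⊕ Fin m // bidx m hm a = ⟨0, hm⟩ } where
  toFun c :=
    if c = 0 then ⟨Sum.inl 0, by simp [bidx]⟩
    else if c = 1 then ⟨Sum.inr ⟨0, hm⟩, rfl⟩
    else ⟨Sum.inl (Fin.succ ⟨0, hm⟩), by simp [bidx]⟩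
  invFun p := match p with
    | ⟨Sum.inl i, _⟩ => if i = 0 then 0 else 2
    | ⟨Sum.inr _, _⟩ => 1
  left_inv := by
    intro c
    fin_cases c <;> rfl
  right_inv := by
    rintro ⟨(i | j), h⟩
    · have h' := h
      simp only [bidx, Sum.elim_inl, Fin.ext_iff] at h'
      by_cases hi0 : i = 0
      · subst hi0
        exact Subtype.ext rfl
      · have hv : i.val ≠ 0 := fun hc => hi0 (Fin.ext hc)
        have hi : i = Fin.succ ⟨0, hm⟩ := Fin.ext (by
          have := i.isLt
          simp only [Fin.val_succ]
          omega)
        subst hi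
        simp only [if_neg hi0]
        exact Subtype.ext rfl
    · have h' := h
      simp only [bidx, Sum.elim_inr, id] at h'
      subst h'
      exact Subtype.ext rfl

/-- `L`-characteristic polynomial of $[S(K_{1,m})]_{H}$ for an
arbitrary graph `H` on the edge set of the star. -/
theorem stmt_11 (m : ℕ) (hm : 0 < m)
    (H : SimpleGraph (Fin m)) [DecidableRel H.Adj]
    (v : Fin m → Fin m → ℝ) (μ : Fin m → ℝ)
    (hortho : ∀ i j, v i ⬝ᵥ v j = if i = j then 1 else 0)
    (heig : ∀ i, (H.lapMatrix ℝ).mulVec (v i) = μ i • v i)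
    (hv0 : ∀ k, v ⟨0, hm⟩ k = 1 / Real.sqrt m)
    (hμ0 : μ ⟨0, hm⟩ = 0)
    (x : ℝ) :
    (x • (1 : Matrix (Fin (m + 1) ⊕ Fin m) (Fin (m + 1) ⊕ Fin m) ℝ) -
        Matrix.fromBlocks (starD m) (-(starB m)) (-(starB m)ᵀ)
          (H.lapMatrix ℝ + (2 : ℝ) • 1)).det
      = x * (x ^ 2 - ((m : ℝ) + 3) * x + 2 * (m : ℝ) + 1) *
          ∏ i ∈ Finset.univ.erase (⟨0, hm⟩ : Fin m),
            (x ^ 2 - (μ i + 3) * x + μ i + 1) := by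
  set z : Fin m := ⟨0, hm⟩ with hz
  set s : ℝ := Real.sqrt m with hsdef
  have hmR : (0 : ℝ) < m := by exact_mod_cast hm
  have hs2 : s * s = m := Real.mul_self_sqrt hmR.le
  have hs : s ≠ 0 := by
    have := Real.sqrt_pos.mpr hmR
    exact ne_of_gt this
  set V : Matrix (Fin m) (Fin m) ℝ := Matrix.of v with hV
  set W : Matrix (Fin (m + 1)) (Fin (m + 1)) ℝ := Wmat m v with hW
  set L : Matrix (Fin m) (Fin m) ℝ := H.lapMatrix ℝ with hL
  -- orthogonality of V and W
  have hVVt : V * Vᵀ = 1 := by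
    ext i k
    rw [Matrix.mul_apply]
    have h := hortho i k
    simp only [dotProduct] at h
    simpa [hV, Matrix.one_apply] using h
  have hWWt : W * Wᵀ = 1 := by
    ext i k
    rw [Matrix.mul_apply]
    simp only [Matrix.transpose_apply]
    induction i using Fin.cases with
    | zero =>
      induction k using Fin.cases with
      | zero => simp [hW, Wmat, Fin.sum_univ_succ, Matrix.one_apply]
      | succ k' =>
        simp [hW, Wmat, Fin.sum_univ_succ, Matrix.one_apply,
          (Fin.succ_ne_zero k').symm, Fin.succ_ne_zero k']
    | succ i' =>
      induction k using Fin.cases with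
      | zero =>
        simp [hW, Wmat, Fin.sum_univ_succ, Matrix.one_apply, Fin.succ_ne_zero i']
      | succ k' =>
        have h := hortho i' k'
        simp only [dotProduct] at h
        simp [hW, Wmat, Fin.sum_univ_succ, h, Matrix.one_apply, Fin.succ_inj]
  -- row sums of v
  have hsum : ∀ k, (∑ j, v k j) = if k = z then s else 0 := by
    intro k
    have h := hortho k z
    simp only [dotProduct, hv0, ← hsdef] at h
    rw [← Finset.sum_mul] at h
    have h2 := congrArg (fun t => t * s) h
    rw [mul_assoc, one_div, inv_mul_cancel₀ hs, mul_one] at h2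
    rw [h2]
    split_ifs <;> simp
  -- the four block computations
  have hWD : W * starD m = starD m * W := by
    ext i l
    rw [starD, Matrix.mul_diagonal, Matrix.diagonal_mul]
    induction i using Fin.cases with
    | zero =>
      induction l using Fin.cases with
      | zero => ring
      | succ l' => simp [hW, Wmat, Fin.succ_ne_zero l']
    | succ i' =>
      induction l using Fin.cases with
      | zero => simp [hW, Wmat, Fin.succ_ne_zero i']
      | succ l' => simp [Fin.succ_ne_zero]
  have hb1 : W * (x • 1 - starD m) * Wᵀ = x • 1 - starD m := by
    rw [Matrix.mul_sub, Matrix.sub_mul, Matrix.mul_smul, Matrix.mul_one,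
      Matrix.smul_mul, hWWt, hWD, Matrix.mul_assoc, hWWt, Matrix.mul_one]
  have hWB : W * starB m = Matrix.of (Fin.cons (fun _ => (1 : ℝ)) v) := by
    ext i j
    rw [Matrix.mul_apply]
    induction i using Fin.cases with
    | zero =>
      simp [hW, Wmat, starB, Fin.sum_univ_succ, Fin.succ_ne_zero]
    | succ i' =>
      simp only [hW]
      rw [Fin.sum_univ_succ]
      have h0 : Wmat m v (Fin.succ i') 0 * starB m 0 j = 0 := by simp [Wmat]
      have hterm : ∀ l : Fin m,
          Wmat m v (Fin.succ i') (Fin.succ l) * starB m (Fin.succ l) j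
          = if l = j then v i' l else 0 := by
        intro l
        simp [Wmat, starB, Fin.succ_ne_zero, Fin.succ_inj, mul_ite]
      rw [h0, zero_add, Finset.sum_congr rfl fun l _ => hterm l,
        Finset.sum_ite_eq' Finset.univ j]
      simp [Wmat]
  have hb2 : W * starB m * Vᵀ = BdMat m := by
    rw [hWB]
    ext i k
    rw [Matrix.mul_apply]
    induction i using Fin.cases with
    | zero =>
      simp only [BdMat, Matrix.of_apply, Fin.cons_zero, Matrix.transpose_apply, hV, one_mul]
      rw [hsum k]
      by_cases hk0 : k = z
      · have hkv : k.val = 0 := by rw [hk0]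
        simp [hk0, hkv, hsdef, hz]
      · have hkv : k.val ≠ 0 := fun hc => hk0 (by rw [hz]; exact Fin.ext hc)
        simp [hk0, hkv]
    | succ i' =>
      have h := hortho i' k
      simp only [dotProduct] at h
      simp only [BdMat, Matrix.of_apply, Fin.cons_succ, Matrix.transpose_apply, hV, h]
      simp [Fin.succ_ne_zero, Fin.succ_inj]
  have hLVt : L * Vᵀ = Matrix.of fun l k => μ k * v k l := by
    ext l k
    rw [Matrix.mul_apply]
    have h := congrFun (heig k) l
    simp only [Matrix.mulVec, dotProduct, Pi.smul_apply, smul_eq_mul] at h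
    simpa [hV] using h
  have hVL : V * L * Vᵀ = Matrix.diagonal μ := by
    rw [Matrix.mul_assoc, hLVt]
    ext i k
    rw [Matrix.mul_apply]
    have h := hortho i k
    simp only [dotProduct] at h
    simp only [Matrix.of_apply]
    have : (∑ l, V i l * (μ k * v k l)) = μ k * ∑ l, v i l * v k l := by
      rw [Finset.mul_sum]
      exact Finset.sum_congr rfl fun l _ => by simp [hV]; ring
    rw [this, h, Matrix.diagonal_apply]
    split_ifs with h1 <;> simp [h1]
  have hb4 : V * (x • 1 - (L + (2 : ℝ) • 1)) * Vᵀ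
      = x • 1 - (Matrix.diagonal μ + (2 : ℝ) • 1) := by
    rw [Matrix.mul_sub, Matrix.sub_mul, Matrix.mul_smul, Matrix.mul_one,
      Matrix.smul_mul, hVVt, Matrix.mul_add, Matrix.add_mul, Matrix.mul_smul,
      Matrix.mul_one, Matrix.smul_mul, hVVt, hVL]
  -- the conjugation
  set U : Matrix (Fin (m + 1) ⊕ Fin m) (Fin (m + 1) ⊕ Fin m) ℝ :=
    Matrix.fromBlocks W 0 0 V with hU
  have hUUt : U * Uᵀ = 1 := by
    rw [hU, Matrix.fromBlocks_transpose, Matrix.fromBlocks_multiply]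
    simp [hWWt, hVVt, Matrix.fromBlocks_one]
  have hX : x • (1 : Matrix (Fin (m + 1) ⊕ Fin m) (Fin (m + 1) ⊕ Fin m) ℝ) -
      Matrix.fromBlocks (starD m) (-(starB m)) (-(starB m)ᵀ) (L + (2 : ℝ) • 1)
      = Matrix.fromBlocks (x • 1 - starD m) (starB m) (starB m)ᵀ
        (x • 1 - (L + (2 : ℝ) • 1)) := by
    rw [← Matrix.fromBlocks_one, Matrix.fromBlocks_smul]
    ext (i | i) (j | j) <;>
      simp [Matrix.fromBlocks, Matrix.sub_apply]
  have key : U * Matrix.fromBlocks (x • 1 - starD m) (starB m) (starB m)ᵀ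
      (x • 1 - (L + (2 : ℝ) • 1)) * Uᵀ = Nmat m μ x := by
    rw [hU, Matrix.fromBlocks_transpose, Matrix.fromBlocks_multiply,
      Matrix.fromBlocks_multiply]
    simp only [Matrix.zero_mul, Matrix.mul_zero, add_zero, zero_add,
      Matrix.transpose_zero]
    have hb3 : V * (starB m)ᵀ * Wᵀ = (BdMat m)ᵀ := by
      have h := congrArg Matrix.transpose hb2
      rwa [Matrix.transpose_mul, Matrix.transpose_mul, Matrix.transpose_transpose,
        ← Matrix.mul_assoc] at h
    rw [Nmat, hb1, hb2, hb3, hb4]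
  -- determinant reduction
  have hdetU : U.det * Uᵀ.det = 1 := by
    rw [← Matrix.det_mul, hUUt, Matrix.det_one]
  have hdet1 : (x • (1 : Matrix (Fin (m + 1) ⊕ Fin m) (Fin (m + 1) ⊕ Fin m) ℝ) -
      Matrix.fromBlocks (starD m) (-(starB m)) (-(starB m)ᵀ)
        (L + (2 : ℝ) • 1)).det = (Nmat m μ x).det := by
    rw [hX, ← key, Matrix.det_mul, Matrix.det_mul]
    linear_combination (-(Matrix.fromBlocks (x • 1 - starD m) (starB m) (starB m)ᵀ
      (x • 1 - (L + (2 : ℝ) • 1))).det) * hdetU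
  rw [hdet1]
  -- block triangularity
  have hNzero : ∀ p q, bidx m hm p ≠ bidx m hm q → Nmat m μ x p q = 0 := by
    rintro (i | i) (j | j) hpq
    · have hij : i ≠ j := fun h => hpq (by rw [h])
      simp [Nmat, Matrix.fromBlocks, starD, Matrix.one_apply, Matrix.diagonal_apply, hij]
    · -- Bd entry
      simp only [bidx, Sum.elim_inl, Sum.elim_inr, id, ne_eq, Fin.ext_iff] at hpq
      have h1 : i ≠ 0 ∨ j.val ≠ 0 := by
        by_contra hc
        push_neg at hc
        obtain ⟨h0, hj0⟩ := hc
        subst h0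
        exact hpq (by simp [hj0])
      have h2 : i ≠ Fin.succ j := by
        intro h
        subst h
        exact hpq (by simp)
      simp only [Nmat, Matrix.fromBlocks_apply₁₂, BdMat, Matrix.of_apply]
      rcases h1 with h1 | h1
      · simp [h1, h2]
      · by_cases hi0 : i = 0
        · simp [hi0, h1]
        · simp [hi0, h2]
    · -- Bdᵀ entry
      simp only [bidx, Sum.elim_inl, Sum.elim_inr, id, ne_eq, Fin.ext_iff] at hpq
      have h1 : j ≠ 0 ∨ i.val ≠ 0 := by
        by_contra hc
        push_neg at hc
        obtain ⟨h0, hi0⟩ := hc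
        subst h0
        exact hpq (by simp [hi0])
      have h2 : j ≠ Fin.succ i := by
        intro h
        subst h
        exact hpq (by simp)
      simp only [Nmat, Matrix.fromBlocks_apply₂₁, Matrix.transpose_apply, BdMat,
        Matrix.of_apply]
      rcases h1 with h1 | h1
      · simp [h1, h2]
      · by_cases hj0 : j = 0
        · simp [hj0, h1]
        · simp [hj0, h2]
    · have hij : i ≠ j := fun h => hpq (by rw [h])
      simp [Nmat, Matrix.fromBlocks, Matrix.one_apply, Matrix.diagonal_apply, hij]
  have hBT : (Nmat m μ x).BlockTriangular (bidx m hm) := fun i j h =>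
    hNzero i j h.ne'
  rw [hBT.det_fintype]
  -- evaluate the blocks
  have hdz : ((Nmat m μ x).toSquareBlock (bidx m hm) z).det
      = x * (x ^ 2 - ((m : ℝ) + 3) * x + 2 * (m : ℝ) + 1) := by
    rw [← Matrix.det_submatrix_equiv_self (eqv3 m hm)]
    rw [Matrix.det_fin_three]
    simp only [Matrix.submatrix_apply, Matrix.toSquareBlock_def, Matrix.of_apply]
    have e0 : ((eqv3 m hm) 0 : Fin (m + 1) ⊕ Fin m) = Sum.inl 0 := rfl
    have e1 : ((eqv3 m hm) 1 : Fin (m + 1) ⊕ Fin m) = Sum.inr z := rfl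
    have e2 : ((eqv3 m hm) 2 : Fin (m + 1) ⊕ Fin m) = Sum.inl (Fin.succ z) := rfl
    rw [e0, e1, e2]
    have hsz : (Fin.succ z : Fin (m + 1)) ≠ 0 := Fin.succ_ne_zero z
    simp only [Nmat, Matrix.fromBlocks_apply₁₁, Matrix.fromBlocks_apply₁₂,
      Matrix.fromBlocks_apply₂₁, Matrix.fromBlocks_apply₂₂, Matrix.transpose_apply,
      BdMat, Matrix.of_apply, starD, Matrix.sub_apply, Matrix.smul_apply,
      Matrix.one_apply, Matrix.diagonal_apply, Matrix.add_apply]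
    simp [hsz, hsz.symm, hμ0, hz, ← hsdef, Fin.ext_iff]
    linear_combination (1 - x) * hs2 +
      (x * (m : ℝ) + x - x ^ 2 - (m : ℝ)) * (hμ0 : μ ⟨0, hm⟩ = 0)
  have hdk : ∀ k : Fin m, k ≠ z →
      ((Nmat m μ x).toSquareBlock (bidx m hm) k).det
      = x ^ 2 - (μ k + 3) * x + μ k + 1 := by
    intro k hk
    rw [← Matrix.det_submatrix_equiv_self (eqv2 m hm k hk)]
    rw [Matrix.det_fin_two]
    simp only [Matrix.submatrix_apply, Matrix.toSquareBlock_def, Matrix.of_apply]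
    have e0 : ((eqv2 m hm k hk) 0 : Fin (m + 1) ⊕ Fin m) = Sum.inl k.succ := rfl
    have e1 : ((eqv2 m hm k hk) 1 : Fin (m + 1) ⊕ Fin m) = Sum.inr k := rfl
    rw [e0, e1]
    have hsk : (Fin.succ k : Fin (m + 1)) ≠ 0 := Fin.succ_ne_zero k
    simp only [Nmat, Matrix.fromBlocks_apply₁₁, Matrix.fromBlocks_apply₁₂,
      Matrix.fromBlocks_apply₂₁, Matrix.fromBlocks_apply₂₂, Matrix.transpose_apply,
      BdMat, Matrix.of_apply, starD, Matrix.sub_apply, Matrix.smul_apply,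
      Matrix.one_apply, Matrix.diagonal_apply, Matrix.add_apply]
    simp [hsk]
    ring
  rw [← Finset.mul_prod_erase Finset.univ _ (Finset.mem_univ z), hdz]
  congr 1
  exact Finset.prod_congr rfl fun k hk => hdk k (Finset.ne_of_mem_erase hk)
end

section
/- Let n ≥ 3 and let i be an integer with 0 ≤ i ≤ ⌊(n−1)/2⌋ − 1. Let H be a graph on n−1 vertices whose adjacency matrix equals A(H) = Σ_{k=0}^{i} (−1)^k · C(2i+1−k, k) · A(P_{n−1})^{2(i−k)+1}. Then the characteristic polynomial of the adjacency matrix of [S(P_n)]_{H}, namely of the block matrix [[0_{n×n}, B(P_n)],[B(P_n)ᵀ, A(H)]], equals x · ∏_{j=1}^{n−1} ( x² − c_j·x − (2cos(πj/n) + 2) ), where c_j = Σ_{k=0}^{i} (−1)^k · C(2i+1−k, k) · (2cos(πj/n))^{2(i−k)+1}. -/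
/-! For `x ≠ 0`, taking the Schur complement of the block `x • 1` turns the determinant into
`xⁿ · det (x • 1 - p(A) - x⁻¹ • BᵀB)`, and for the path `BᵀB = A + 2`, where `A = A(P_{n-1})`.
The sine vectors `a ↦ sin ((a + 1) π j / n)` are eigenvectors of `A` for the distinct eigenvalues
`2 cos (π j / n)`, so they diagonalize every polynomial in `A` and the determinant becomes a
product over these eigenvalues. The case `x = 0` follows by continuity. -/

open Matrix SimpleGraph

/-- The adjacency matrix of the path graph $P_k$ on `k` vertices `0, 1, …, k-1`
(consecutive vertices adjacent). -/
def pathA (k : ℕ) : Matrix (Fin k) (Fin k) ℝ :=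
  Matrix.of fun a b => if (a : ℕ) + 1 = (b : ℕ) ∨ (b : ℕ) + 1 = (a : ℕ) then 1 else 0

/-- The $n\times(n-1)$ vertex–edge incidence matrix of the path graph $P_n$:
edge `j` joins vertices `j` and `j+1`. -/
def pathB (n : ℕ) : Matrix (Fin n) (Fin (n - 1)) ℝ :=
  Matrix.of fun a j => if (a : ℕ) = (j : ℕ) ∨ (a : ℕ) = (j : ℕ) + 1 then 1 else 0

open Polynomial Real

section LinearAlgebra

variable {K : Type*} [Field K] {ι : Type*} [Fintype ι] [DecidableEq ι]

theorem Matrix.det_smul_one_sub_fromBlocks_zero {m n : Type*} [Fintype m] [DecidableEq m]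
    [Fintype n] [DecidableEq n] (B : Matrix m n K) (C : Matrix n m K) (D : Matrix n n K) {x : K}
    (hx : x ≠ 0) :
    (x • (1 : Matrix (m ⊕ n) (m ⊕ n) K) - fromBlocks 0 B C D).det
      = x ^ Fintype.card m * (x • 1 - D - x⁻¹ • (C * B)).det := by
  let _ : Invertible (x • (1 : Matrix m m K)) := ⟨x⁻¹ • 1, by simp [hx], by simp [hx]⟩
  have hblocks : x • (1 : Matrix (m ⊕ n) (m ⊕ n) K) - fromBlocks 0 B C D
      = fromBlocks (x • 1) (-B) (-C) (x • 1 - D) := by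
    rw [← fromBlocks_one, fromBlocks_smul, sub_eq_add_neg, fromBlocks_neg, fromBlocks_add]
    simp [sub_eq_add_neg]
  rw [hblocks, det_fromBlocks₁₁, det_smul, det_one, mul_one]
  congr 2
  change _ - -C * (x⁻¹ • 1) * -B = _
  simp [Matrix.smul_mul]

theorem Matrix.aeval_diagonal (d : ι → K) (p : K[X]) :
    aeval (diagonal d) p = diagonal fun j => p.eval (d j) := by
  change aeval (diagonalAlgHom K d) p = _
  rw [aeval_algHom_apply, aeval_pi]
  rfl

theorem Matrix.aeval_mul_eq_mul_aeval {A S D : Matrix ι ι K} (h : A * S = S * D) (p : K[X]) :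
    aeval A p * S = S * aeval D p := by
  induction p using Polynomial.induction_on' with
  | add p q hp hq => simp only [map_add, Matrix.add_mul, Matrix.mul_add, hp, hq]
  | monomial n a =>
    have hpow : A ^ n * S = S * D ^ n := (SemiconjBy.pow_right h.symm n).symm
    simp only [aeval_monomial, Algebra.algebraMap_eq_smul_one, Matrix.smul_mul, Matrix.mul_smul,
      Matrix.one_mul, hpow]

theorem Matrix.det_aeval_eq_prod {A S : Matrix ι ι K} {d : ι → K} (h : A * S = S * diagonal d)
    (hS : S.det ≠ 0) (p : K[X]) : (aeval A p).det = ∏ j, p.eval (d j) := by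
  have := congrArg det (aeval_mul_eq_mul_aeval h p)
  rw [det_mul, det_mul, aeval_diagonal, det_diagonal, mul_comm] at this
  exact mul_left_cancel₀ hS this

theorem Matrix.det_ne_zero_of_mul_eq_mul_diagonal {A S : Matrix ι ι K} {d : ι → K}
    (h : A * S = S * diagonal d) (hd : Function.Injective d) (hS : ∀ j, S.col j ≠ 0) :
    S.det ≠ 0 := by
  rw [← isUnit_iff_ne_zero, ← isUnit_iff_isUnit_det, ← linearIndependent_cols_iff_isUnit]
  refine Module.End.eigenvectors_linearIndependent' (mulVecLin A) d hd _ fun j => ⟨?_, hS j⟩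
  rw [Module.End.mem_eigenspace_iff, mulVecLin_apply]
  funext a
  have := congrFun₂ h a j
  rw [mul_diagonal, mul_apply] at this
  simpa [mul_comm, mulVec, dotProduct] using this

end LinearAlgebra

theorem Fin.sum_ite_val_eq {M : Type*} [AddCommMonoid M] (n s : ℕ) (c : M) :
    (∑ a : Fin n, if (a : ℕ) = s then c else 0) = if s < n then c else 0 := by
  rw [Fin.sum_univ_eq_sum_range (fun a => if a = s then c else 0), Finset.sum_ite_eq']
  simp

theorem Real.sin_add_two_add_sin (θ t : ℝ) :
    sin (θ * (t + 2)) + sin (θ * t) = 2 * cos θ * sin (θ * (t + 1)) := by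
  rw [show θ * (t + 2) = θ * (t + 1) + θ by ring, show θ * t = θ * (t + 1) - θ by ring,
    sin_add, sin_sub]
  ring

theorem pathB_transpose_mul_pathB (n : ℕ) :
    (pathB n)ᵀ * pathB n = pathA (n - 1) + (2 : ℝ) • 1 := by
  ext j k
  have := j.isLt
  have := k.isLt
  let b : ℕ → ℕ → ℝ := fun t l => if t = l ∨ t = l + 1 then 1 else 0
  have hsplit : ∀ a : Fin n, pathB n a j * pathB n a k
      = (if (a : ℕ) = j then b j k else 0) + (if (a : ℕ) = j + 1 then b (j + 1) k else 0) := by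
    intro a
    simp only [pathB, of_apply, b]
    split_ifs <;> norm_num <;> omega
  simp only [mul_apply, transpose_apply, hsplit, Finset.sum_add_distrib, Fin.sum_ite_val_eq]
  simp only [b, pathA, Matrix.add_apply, Matrix.smul_apply, one_apply, of_apply, Fin.ext_iff]
  split_ifs <;> norm_num <;> omega

/-- A sequence vanishing at `0` and `k + 1` is the extension by zero of a vector on `Fin k`, so
`A(P_k)` acts on it as the second-order difference operator. -/
theorem pathA_mulVec_apply {k : ℕ} (g : ℕ → ℝ) (h0 : g 0 = 0) (hk : g (k + 1) = 0) (a : Fin k) :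
    (pathA k *ᵥ fun b => g (b + 1)) a = g a + g (a + 2) := by
  have hsplit : ∀ b : Fin k, pathA k a b * g (b + 1)
      = (if (b : ℕ) = a + 1 then g (a + 2) else 0)
        + (if (b : ℕ) = a - 1 ∧ 0 < (a : ℕ) then g a else 0) := by
    intro b
    simp only [pathA, of_apply]
    split_ifs <;> simp only [one_mul, zero_mul, add_zero, zero_add] <;>
      first | omega | rfl | (congr 1; omega)
  simp only [mulVec, dotProduct, hsplit, Finset.sum_add_distrib, Fin.sum_ite_val_eq, ite_and]
  have hright : ¬ (a : ℕ) + 1 < k → g (a + 2) = 0 := fun h => by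
    rw [show (a : ℕ) + 2 = k + 1 by omega, hk]
  have hleft : ¬ 0 < (a : ℕ) → g a = 0 := fun h => by rw [Nat.eq_zero_of_not_pos h, h0]
  rw [if_pos (show (a : ℕ) - 1 < k by omega)]
  by_cases h1 : (a : ℕ) + 1 < k <;> by_cases h2 : 0 < (a : ℕ) <;>
    simp [h1, h2, hright, hleft, add_comm]

noncomputable def pathAngle (n : ℕ) (j : Fin (n - 1)) : ℝ := π * ((j : ℕ) + 1) / n

noncomputable def sineMatrix (n : ℕ) : Matrix (Fin (n - 1)) (Fin (n - 1)) ℝ :=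
  of fun a j => sin (pathAngle n j * ((a : ℕ) + 1))

theorem pathAngle_mem_Ioo {n : ℕ} (j : Fin (n - 1)) : pathAngle n j ∈ Set.Ioo 0 π := by
  have hj : (j : ℝ) + 1 < n := by exact_mod_cast (by omega : (j : ℕ) + 1 < n)
  have hn : (0 : ℝ) < n := by linarith [(j : ℕ).cast_nonneg (α := ℝ)]
  constructor
  · unfold pathAngle; positivity
  · rw [pathAngle, div_lt_iff₀ hn]; nlinarith [pi_pos]

theorem sin_pathAngle_mul_self {n : ℕ} (j : Fin (n - 1)) : sin (pathAngle n j * n) = 0 := by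
  have hn : (n : ℝ) ≠ 0 := Nat.cast_ne_zero.2 (by have := j.isLt; omega)
  rw [pathAngle, div_mul_cancel₀ _ hn, show π * ((j : ℝ) + 1) = ((j + 1 : ℕ) : ℝ) * π by
    push_cast; ring]
  exact sin_nat_mul_pi _

theorem pathA_mul_sineMatrix (n : ℕ) :
    pathA (n - 1) * sineMatrix n = sineMatrix n * diagonal fun j => 2 * cos (pathAngle n j) := by
  ext a j
  have key := pathA_mulVec_apply (fun t => sin (pathAngle n j * t)) (by simp)
    (by rw [show n - 1 + 1 = n by have := a.isLt; omega]; exact sin_pathAngle_mul_self j) a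
  rw [mul_diagonal]
  simp only [mulVec, dotProduct, Nat.cast_add, Nat.cast_one, Nat.cast_ofNat] at key
  simp only [mul_apply, sineMatrix, of_apply, key]
  rw [add_comm, sin_add_two_add_sin]
  ring

theorem det_sineMatrix_ne_zero (n : ℕ) : (sineMatrix n).det ≠ 0 := by
  refine det_ne_zero_of_mul_eq_mul_diagonal (pathA_mul_sineMatrix n) ?_ fun j hj => ?_
  · intro j k h
    have := injOn_cos (Set.Ioo_subset_Icc_self (pathAngle_mem_Ioo j))
      (Set.Ioo_subset_Icc_self (pathAngle_mem_Ioo k)) (by simpa using h)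
    have hn : (n : ℝ) ≠ 0 := Nat.cast_ne_zero.2 (by have := j.isLt; omega)
    rw [pathAngle, pathAngle, div_left_inj' hn, mul_right_inj' pi_ne_zero] at this
    exact Fin.ext (by exact_mod_cast add_right_cancel this)
  · have h0 := congrFun hj ⟨0, by have := j.isLt; omega⟩
    have := pathAngle_mem_Ioo j
    simp only [col_apply, sineMatrix, of_apply, Nat.cast_zero, zero_add, mul_one,
      Pi.zero_apply] at h0
    exact (sin_pos_of_pos_of_lt_pi this.1 this.2).ne' h0

theorem det_aeval_pathA (n : ℕ) (p : ℝ[X]) :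
    (aeval (pathA (n - 1)) p).det = ∏ j, p.eval (2 * cos (pathAngle n j)) :=
  det_aeval_eq_prod (pathA_mul_sineMatrix n) (det_sineMatrix_ne_zero n) p

theorem det_smul_one_sub_fromBlocks_pathB_of_ne_zero {n : ℕ} (hn : 0 < n) (p : ℝ[X]) {x : ℝ}
    (hx : x ≠ 0) :
    (x • (1 : Matrix (Fin n ⊕ Fin (n - 1)) (Fin n ⊕ Fin (n - 1)) ℝ) -
        fromBlocks 0 (pathB n) (pathB n)ᵀ (aeval (pathA (n - 1)) p)).det
      = x * ∏ j, (x ^ 2 - p.eval (2 * cos (pathAngle n j)) * x - (2 * cos (pathAngle n j) + 2)) := by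
  have hschur : x • 1 - aeval (pathA (n - 1)) p - x⁻¹ • ((pathB n)ᵀ * pathB n)
      = aeval (pathA (n - 1)) (C x - p - C x⁻¹ * (X + C 2)) := by
    rw [pathB_transpose_mul_pathB]
    simp [Algebra.algebraMap_eq_smul_one, smul_add]
  have hpow : x ^ n = x * ∏ _j : Fin (n - 1), x := by
    rw [Fin.prod_const, ← pow_succ', Nat.sub_add_cancel hn]
  rw [det_smul_one_sub_fromBlocks_zero _ _ _ hx, hschur, det_aeval_pathA, Fintype.card_fin, hpow,
    mul_assoc, ← Finset.prod_mul_distrib]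
  congr 1
  refine Finset.prod_congr rfl fun j _ => ?_
  simp only [eval_sub, eval_mul, eval_C, eval_add, eval_X]
  field_simp

theorem det_smul_one_sub_fromBlocks_pathB {n : ℕ} (hn : 0 < n) (p : ℝ[X]) (x : ℝ) :
    (x • (1 : Matrix (Fin n ⊕ Fin (n - 1)) (Fin n ⊕ Fin (n - 1)) ℝ) -
        fromBlocks 0 (pathB n) (pathB n)ᵀ (aeval (pathA (n - 1)) p)).det
      = x * ∏ j, (x ^ 2 - p.eval (2 * cos (pathAngle n j)) * x - (2 * cos (pathAngle n j) + 2)) := by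
  refine congrFun (Continuous.ext_on (dense_compl_singleton 0) ?_ ?_
    fun y hy => det_smul_one_sub_fromBlocks_pathB_of_ne_zero hn p hy) x
  · fun_prop
  · fun_prop

theorem stmt_12_general (n i : ℕ) (hn : 3 ≤ n)
    (H : SimpleGraph (Fin (n - 1))) [DecidableRel H.Adj]
    (hH : H.adjMatrix ℝ = ∑ k ∈ Finset.range (i + 1),
      ((-1 : ℝ) ^ k * (Nat.choose (2 * i + 1 - k) k : ℝ)) •
        (pathA (n - 1)) ^ (2 * (i - k) + 1))
    (x : ℝ) :
    (x • (1 : Matrix (Fin n ⊕ Fin (n - 1)) (Fin n ⊕ Fin (n - 1)) ℝ) -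
        Matrix.fromBlocks 0 (pathB n) (pathB n)ᵀ (H.adjMatrix ℝ)).det
      = x * ∏ j : Fin (n - 1),
          (x ^ 2 -
            (∑ k ∈ Finset.range (i + 1),
              (-1 : ℝ) ^ k * (Nat.choose (2 * i + 1 - k) k : ℝ) *
                (2 * Real.cos (Real.pi * ((j : ℕ) + 1) / n)) ^ (2 * (i - k) + 1)) * x -
            (2 * Real.cos (Real.pi * ((j : ℕ) + 1) / n) + 2)) := by
  let p : ℝ[X] := ∑ k ∈ Finset.range (i + 1),
    ((-1 : ℝ) ^ k * (Nat.choose (2 * i + 1 - k) k : ℝ)) • X ^ (2 * (i - k) + 1)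
  have hp : H.adjMatrix ℝ = aeval (pathA (n - 1)) p := by
    simp only [hH, p, map_sum, map_smul, aeval_X_pow]
  rw [hp, det_smul_one_sub_fromBlocks_pathB (by omega) p x]
  simp only [p, eval_finsetSum, eval_smul, eval_pow, eval_X, smul_eq_mul, pathAngle]

/-- `A`-characteristic polynomial of $[S(P_n)]_{H}$ where
$A(H) = P_{P_{2i+1}}(A(P_{n-1}))$. -/
theorem stmt_12 (n i : ℕ) (hn : 3 ≤ n) (hi : i + 1 ≤ (n - 1) / 2)
    (H : SimpleGraph (Fin (n - 1))) [DecidableRel H.Adj]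
    (hH : H.adjMatrix ℝ = ∑ k ∈ Finset.range (i + 1),
      ((-1 : ℝ) ^ k * (Nat.choose (2 * i + 1 - k) k : ℝ)) •
        (pathA (n - 1)) ^ (2 * (i - k) + 1))
    (x : ℝ) :
    (x • (1 : Matrix (Fin n ⊕ Fin (n - 1)) (Fin n ⊕ Fin (n - 1)) ℝ) -
        Matrix.fromBlocks 0 (pathB n) (pathB n)ᵀ (H.adjMatrix ℝ)).det
      = x * ∏ j : Fin (n - 1),
          (x ^ 2 -
            (∑ k ∈ Finset.range (i + 1),
              (-1 : ℝ) ^ k * (Nat.choose (2 * i + 1 - k) k : ℝ) *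
                (2 * Real.cos (Real.pi * ((j : ℕ) + 1) / n)) ^ (2 * (i - k) + 1)) * x -
            (2 * Real.cos (Real.pi * ((j : ℕ) + 1) / n) + 2)) :=
  stmt_12_general n i hn H hH x
end

section
/- Let G be a graph with n vertices and m ≥ 1 edges. Let A be the adjacency matrix of the Q-complemented graph of G, i.e., the block matrix [[0_{n×n}, B(G)],[B(G)ᵀ, J_m − I_m − A(𝓛(G))]]. Then for every real x with x ≠ 1 such that the matrix ((x²+x−2)/(1−x))·I_m − A(𝓛(G)) is invertible, det(x·I_{n+m} − A) = (−1)^n·(x−1)^m·( 1 − (x/(1−x))·χ_{𝓛(G)}((x²+x−2)/(1−x)) )·𝒬_G(−x). -/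
/-!
Right-multiplying `x • 1 - A` by the block matrix `[[1, B], [-Bᵀ, x • 1]]`, whose determinant is
`det (x • 1 + BᵀB)`, makes it block lower triangular with diagonal blocks `x • 1 + BBᵀ` and
`(1 - x) • K - x • J`, where `K = y • 1 - A(𝓛(G)) = -(x • 1 + BᵀB)` for `y = (x² + x - 2)/(1 - x)`.
The matrix determinant lemma turns the rank-one perturbation by `J` into the coronal
`χ_{𝓛(G)}(y) = ∑ᵢⱼ K⁻¹ᵢⱼ`, and `det K = (-1)^m det (x • 1 + BᵀB)` cancels against the multiplier.
-/

open Matrix SimpleGraph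

/-- The vertex–edge incidence matrix of a graph, relative to an enumeration
`e` of its edges. -/
noncomputable def incMat {V : Type} [Fintype V] [DecidableEq V] {m : ℕ}
    (G : SimpleGraph V) [Fintype G.edgeSet] (e : Fin m ≃ G.edgeFinset) :
    Matrix V (Fin m) ℝ :=
  Matrix.of fun i j => if i ∈ (e j : Sym2 V) then (1 : ℝ) else 0

/-- The coronal of a matrix: $\chi_M(y)=\mathbb 1^T (yI-M)^{-1}\mathbb 1$,
i.e. the sum of all entries of $(yI-M)^{-1}$. -/
noncomputable def coronal {k : ℕ} (M : Matrix (Fin k) (Fin k) ℝ) (y : ℝ) : ℝ :=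
  ∑ i : Fin k, ∑ j : Fin k, ((y • (1 : Matrix (Fin k) (Fin k) ℝ) - M)⁻¹) i j

namespace Matrix

variable {ι κ : Type*} [Fintype ι] [Fintype κ] [DecidableEq ι] [DecidableEq κ]

theorem det_smul_one_sub_fromBlocks_zero₁₁_mul {R : Type*} [CommRing R] (x : R) (B : Matrix ι κ R)
    (C : Matrix κ ι R) (E : Matrix κ κ R) :
    (x • 1 - fromBlocks 0 B C E).det * (x • 1 + C * B).det
      = (x • 1 + B * C).det * (x • (x • 1 - E) - C * B).det := by
  have hprod : (x • 1 - fromBlocks 0 B C E) * fromBlocks 1 B (-C) (x • 1)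
      = fromBlocks (x • 1 + B * C) 0 (-(C + (x • 1 - E) * C)) (x • (x • 1 - E) - C * B) := by
    rw [← fromBlocks_one, fromBlocks_smul, sub_eq_add_neg, fromBlocks_neg, fromBlocks_add,
      fromBlocks_multiply]
    congr 1 <;>
      simp only [Matrix.smul_mul, Matrix.mul_smul, Matrix.one_mul, Matrix.mul_one, Matrix.mul_neg,
        Matrix.neg_mul, Matrix.add_mul, Matrix.sub_mul, Matrix.zero_mul, smul_zero, neg_zero] <;>
      module
  have := congrArg det hprod
  rwa [det_mul, det_fromBlocks_one₁₁, Matrix.neg_mul, sub_neg_eq_add,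
    det_fromBlocks_zero₁₂] at this

theorem det_sub_smul_ones {R : Type*} [CommRing R] {N : Matrix ι ι R} (hN : IsUnit N.det)
    (c : R) : (N - c • of fun _ _ => (1 : R)).det = N.det * (1 - c * ∑ i, ∑ j, N⁻¹ i j) := by
  have hJ : N - c • of (fun _ _ => (1 : R))
      = N + replicateCol Unit (fun _ : ι => -c) * replicateRow Unit (fun _ : ι => (1 : R)) := by
    ext i j; simp [sub_eq_add_neg, Matrix.mul_apply]
  rw [hJ, det_add_replicateCol_mul_replicateRow hN, det_unique (n := Unit)]
  simp only [add_apply, one_apply_eq, mul_apply, replicateRow_apply, replicateCol_apply, one_mul,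
    mul_neg, Finset.sum_neg_distrib, ← Finset.sum_mul, sub_eq_add_neg]
  rw [Finset.sum_comm, mul_comm c]

theorem det_smul_sub_smul_ones {𝕜 : Type*} [Field 𝕜] {K : Matrix ι ι 𝕜} (hK : IsUnit K.det)
    {a : 𝕜} (ha : a ≠ 0) (c : 𝕜) :
    (a • K - c • of fun _ _ => (1 : 𝕜)).det
      = a ^ Fintype.card ι * K.det * (1 - c / a * ∑ i, ∑ j, K⁻¹ i j) := by
  rw [show a • K - c • of (fun _ _ => (1 : 𝕜)) = a • (K - (c / a) • of fun _ _ => 1) by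
      rw [smul_sub, smul_smul, mul_div_cancel₀ c ha],
    det_smul, det_sub_smul_ones hK, mul_assoc]

end Matrix

theorem stmt_13_general (n m : ℕ)
    (G : SimpleGraph (Fin n)) [Fintype G.edgeSet]
    (e : Fin m ≃ G.edgeFinset)
    (x : ℝ) (hx : x ≠ 1)
    (hinv : IsUnit (((x ^ 2 + x - 2) / (1 - x)) • (1 : Matrix (Fin m) (Fin m) ℝ) -
      ((incMat G e)ᵀ * incMat G e - (2 : ℝ) • 1))) :
    (x • (1 : Matrix (Fin n ⊕ Fin m) (Fin n ⊕ Fin m) ℝ) -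
        Matrix.fromBlocks 0 (incMat G e) (incMat G e)ᵀ
          (Matrix.of (fun _ _ => (1 : ℝ)) - 1 -
            ((incMat G e)ᵀ * incMat G e - (2 : ℝ) • 1))).det
      = (-1 : ℝ) ^ n * (x - 1) ^ m *
          (1 - (x / (1 - x)) *
            coronal ((incMat G e)ᵀ * incMat G e - (2 : ℝ) • 1)
              ((x ^ 2 + x - 2) / (1 - x))) *
          ((-x) • (1 : Matrix (Fin n) (Fin n) ℝ) - incMat G e * (incMat G e)ᵀ).det := by
  set B := incMat G e
  set K := ((x ^ 2 + x - 2) / (1 - x)) • (1 : Matrix (Fin m) (Fin m) ℝ) - (Bᵀ * B - (2 : ℝ) • 1)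
    with hK
  have h1x : 1 - x ≠ 0 := sub_ne_zero.2 hx.symm
  have hKN : K = -(x • 1 + Bᵀ * B) := by
    rw [hK, show (x ^ 2 + x - 2) / (1 - x) = -(x + 2) by field_simp; ring]
    module
  have hKdet : K.det = (-1) ^ m * (x • 1 + Bᵀ * B).det := by
    rw [hKN, det_neg, Fintype.card_fin]
  have hNdet : (x • 1 + Bᵀ * B).det ≠ 0 := by
    have := ((isUnit_iff_isUnit_det K).1 hinv).ne_zero
    rw [hKdet] at this
    exact right_ne_zero_of_mul this
  have hSchur := det_smul_one_sub_fromBlocks_zero₁₁_mul x B Bᵀ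
    (of (fun _ _ => (1 : ℝ)) - 1 - (Bᵀ * B - (2 : ℝ) • 1))
  rw [show x • (x • 1 - (of (fun _ _ => (1 : ℝ)) - 1 - (Bᵀ * B - (2 : ℝ) • 1))) - Bᵀ * B
      = (1 - x) • K - x • of (fun _ _ => (1 : ℝ)) by rw [hKN]; module,
    det_smul_sub_smul_ones ((isUnit_iff_isUnit_det K).1 hinv) h1x, hKdet] at hSchur
  rw [show (-x) • (1 : Matrix (Fin n) (Fin n) ℝ) - B * Bᵀ = -(x • 1 + B * Bᵀ) by module,
    det_neg, Fintype.card_fin]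
  apply mul_right_cancel₀ hNdet
  rw [hSchur, coronal, ← hK, Fintype.card_fin,
    show (x - 1) ^ m = (-1) ^ m * (1 - x) ^ m by rw [← mul_pow]; ring]
  have hsign : ((-1 : ℝ) ^ n) * (-1) ^ n = 1 := by rw [← mul_pow]; norm_num
  linear_combination (-(x • 1 + B * Bᵀ).det * (-1) ^ m * (1 - x) ^ m * (x • 1 + Bᵀ * B).det *
    (1 - x / (1 - x) * ∑ i, ∑ j, K⁻¹ i j)) * hsign

/-- `A`-characteristic polynomial of the Q-complemented graph
of `G`, at points `x` where the relevant matrix is invertible.  Here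
$A(\mathcal L(G)) = B^TB-2I$ and $Q(G)=BB^T$. -/
theorem stmt_13 (n m : ℕ) (hm : 1 ≤ m)
    (G : SimpleGraph (Fin n)) [DecidableRel G.Adj] [Fintype G.edgeSet]
    (e : Fin m ≃ G.edgeFinset)
    (x : ℝ) (hx : x ≠ 1)
    (hinv : IsUnit (((x ^ 2 + x - 2) / (1 - x)) • (1 : Matrix (Fin m) (Fin m) ℝ) -
      ((incMat G e)ᵀ * incMat G e - (2 : ℝ) • 1))) :
    (x • (1 : Matrix (Fin n ⊕ Fin m) (Fin n ⊕ Fin m) ℝ) -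
        Matrix.fromBlocks 0 (incMat G e) (incMat G e)ᵀ
          (Matrix.of (fun _ _ => (1 : ℝ)) - 1 -
            ((incMat G e)ᵀ * incMat G e - (2 : ℝ) • 1))).det
      = (-1 : ℝ) ^ n * (x - 1) ^ m *
          (1 - (x / (1 - x)) *
            coronal ((incMat G e)ᵀ * incMat G e - (2 : ℝ) • 1)
              ((x ^ 2 + x - 2) / (1 - x))) *
          ((-x) • (1 : Matrix (Fin n) (Fin n) ℝ) - incMat G e * (incMat G e)ᵀ).det :=
  stmt_13_general n m G e x hx hinv
end

section
/- Let G be a graph with n vertices and m edges whose line graph is r-regular with r ≥ 1 (equivalently, d(u)+d(v) = r+2 for every edge uv of G). Let ν_1 = r+2, ν_2, …, ν_n be the signless Laplacian eigenvalues of G (r+2 is always a signless Laplacian eigenvalue of such a G). Then the characteristic polynomial of the adjacency matrix of the Q-complemented graph of G, namely of [[0_{n×n}, B(G)],[B(G)ᵀ, J_m − I_m − A(𝓛(G))]], equals (x−1)^{m−1}·(x² − (m−r−1)x − (r+2))·∏_{i=2}^{n} (x + ν_i). -/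
/-!
Write `B` for the incidence matrix and `J` for the all-ones matrix. Taking the Schur complement of
the block `x • 1` (for `x ≠ 0`) gives `det (x • 1 - A) = xⁿ · det (M - J)` with
`M = (x - 1) • (1 + x⁻¹ • BᵀB)`. Because the line graph is `r`-regular, the all-ones vector is an
eigenvector of `BᵀB` with eigenvalue `r + 2`, hence of `M`, and the matrix determinant lemma
gives `det (M - J) = det M · (1 - m / c)` for the corresponding eigenvalue `c` of `M`. Sylvester's
identity `det (1 + x⁻¹ • BᵀB) = det (1 + x⁻¹ • BBᵀ)` then brings in the signless Laplacian
eigenvalues. This proves the identity for all but finitely many `x`, and both sides are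
polynomials in `x`.
-/

open Matrix SimpleGraph

section Incidence

variable {V : Type} [Fintype V] [DecidableEq V] {m : ℕ} (G : SimpleGraph V)
  [Fintype G.edgeSet] (e : Fin m ≃ G.edgeFinset)

theorem incMat_mulVec_one [DecidableRel G.Adj] :
    incMat G e *ᵥ (fun _ => 1) = fun i => (G.degree i : ℝ) := by
  ext i
  have : ∑ j, incMat G e i j = ∑ s ∈ G.edgeFinset, if i ∈ s then (1 : ℝ) else 0 := by
    rw [← Finset.sum_attach G.edgeFinset fun s => if i ∈ s then (1 : ℝ) else 0]
    exact Fintype.sum_equiv e _ _ fun _ => rfl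
  simp only [mulVec, dotProduct, mul_one, this, Finset.sum_boole, ← incidenceFinset_eq_filter,
    card_incidenceFinset_eq_degree]

theorem transpose_incMat_mulVec_apply {j : Fin m} {u w : V} (huw : (e j : Sym2 V) = s(u, w))
    (f : V → ℝ) : ((incMat G e)ᵀ *ᵥ f) j = f u + f w := by
  have hne : u ≠ w := by
    have := (e j).2
    rw [huw, mem_edgeFinset, mem_edgeSet] at this
    exact this.ne
  simp only [mulVec, dotProduct, transpose_apply, incMat, of_apply, huw, Sym2.mem_iff, ite_mul,
    one_mul, zero_mul, Finset.sum_ite, Finset.sum_const_zero, add_zero]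
  rw [show Finset.univ.filter (fun i => i = u ∨ i = w) = {u, w} by ext; simp,
    Finset.sum_pair hne]

theorem transpose_incMat_mul_incMat_mulVec_one [DecidableRel G.Adj] {r : ℕ}
    (hreg : ∀ u w : V, G.Adj u w → G.degree u + G.degree w = r + 2) :
    ((incMat G e)ᵀ * incMat G e) *ᵥ (fun _ => 1) = fun _ => (r + 2 : ℝ) := by
  ext j
  obtain ⟨⟨u, w⟩, huw⟩ := Quot.exists_rep (e j : Sym2 V)
  have hadj : G.Adj u w := by
    have := (e j).2
    rwa [← huw, mem_edgeFinset] at this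
  rw [← mulVec_mulVec, incMat_mulVec_one, transpose_incMat_mulVec_apply G e huw.symm]
  exact_mod_cast hreg u w hadj

end Incidence

namespace Matrix

variable {ι κ : Type*} [Fintype ι] [DecidableEq ι]

theorem det_eq_prod_of_orthonormal_eigenvectors {R : Type*} [CommRing R] (A : Matrix ι ι R)
    (v : ι → ι → R) (μ : ι → R) (hortho : ∀ i j, v i ⬝ᵥ v j = if i = j then 1 else 0)
    (heig : ∀ i, A *ᵥ v i = μ i • v i) : A.det = ∏ i, μ i := by
  set P : Matrix ι ι R := Matrix.of v
  have hP : P * Pᵀ = 1 := by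
    ext i j
    simpa [P, mul_apply, one_apply, dotProduct] using hortho i j
  have hAP : A * Pᵀ = Pᵀ * diagonal μ := by
    ext j i
    rw [mul_diagonal]
    simpa [P, mul_apply, mulVec, dotProduct, mul_comm] using congrFun (heig i) j
  have hunit : IsUnit Pᵀ.det := isUnit_det_of_left_inverse hP
  have := congrArg det hAP
  rw [det_mul, det_mul, det_diagonal, mul_comm] at this
  exact hunit.mul_left_cancel this

theorem det_smul_one_sub_fromBlocks_zero_s14 {K : Type*} [Field K] [Fintype κ] [DecidableEq κ]
    {x : K} (hx : x ≠ 0) (B : Matrix ι κ K) (C : Matrix κ ι K) (D : Matrix κ κ K) :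
    (x • 1 - fromBlocks 0 B C D).det = x ^ Fintype.card ι * (x • 1 - D - x⁻¹ • (C * B)).det := by
  have hfac : x • 1 - fromBlocks 0 B C D
      = fromBlocks (x • 1) 0 0 1 * fromBlocks 1 (-x⁻¹ • B) (-C) (x • 1 - D) := by
    ext (i | i) (j | j) <;> simp [fromBlocks_multiply, one_apply, hx]
  rw [hfac, det_mul, det_fromBlocks_zero₂₁, det_fromBlocks_one₁₁, det_smul, det_one, det_one]
  simp

theorem det_sub_allOnes_of_mulVec_one {K : Type*} [Field K] {M : Matrix ι ι K} (hM : IsUnit M.det)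
    {c : K} (hc : c ≠ 0) (hMc : M *ᵥ (fun _ => 1) = c • fun _ => 1) :
    (M - of fun _ _ => 1).det = M.det * (1 - Fintype.card ι / c) := by
  have hinv : M⁻¹ *ᵥ (fun _ => 1) = c⁻¹ • fun _ => 1 := by
    conv_lhs => rw [← inv_smul_smul₀ hc (fun _ : ι => (1 : K)), ← hMc, mulVec_smul,
      mulVec_mulVec, nonsing_inv_mul M hM, one_mulVec]
  have hJ : (of fun _ _ => (1 : K) : Matrix ι ι K)
      = -(replicateCol Unit (fun _ : ι => (1 : K)) * replicateRow Unit fun _ : ι => (-1 : K)) := by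
    ext; simp [mul_apply]
  rw [hJ, sub_neg_eq_add, det_add_replicateCol_mul_replicateRow hM, Matrix.mul_assoc,
    ← replicateCol_mulVec, hinv, det_unique (1 + _ : Matrix Unit Unit K), add_apply, one_apply_eq,
    replicateRow_mul_replicateCol_apply]
  simp [dotProduct, div_eq_mul_inv, sub_eq_add_neg]

theorem pow_card_mul_det_one_add_inv_smul_transpose_mul {K : Type*} [Field K] [Fintype κ]
    [DecidableEq κ] {x : K} (hx : x ≠ 0) (B : Matrix ι κ K) :
    x ^ Fintype.card ι * (1 + x⁻¹ • (Bᵀ * B)).det = (x • 1 + B * Bᵀ).det := by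
  rw [← smul_mul, det_one_add_mul_comm, Matrix.mul_smul, ← det_smul, smul_add, smul_smul,
    mul_inv_cancel₀ hx, one_smul]

end Matrix

theorem det_smul_one_sub_eq_eval_of_finite {K ι : Type*} [Field K] [Infinite K] [Fintype ι]
    [DecidableEq ι] (N : Matrix ι ι K) (q : Polynomial K) {S : Set K} (hS : S.Finite)
    (h : ∀ x ∉ S, (x • 1 - N).det = q.eval x) (x : K) : (x • 1 - N).det = q.eval x := by
  have hcharpoly : ∀ y : K, (y • 1 - N).det = N.charpoly.eval y := by
    intro y
    rw [eval_charpoly, scalar_apply, smul_one_eq_diagonal]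
  suffices N.charpoly = q by rw [hcharpoly, this]
  refine Polynomial.eq_of_infinite_eval_eq _ _ (hS.infinite_compl.mono fun y hy => ?_)
  rw [Set.mem_ofPred_eq, ← hcharpoly]
  exact h y hy

section QComplement

variable {V : Type} [Fintype V] [DecidableEq V] {m : ℕ} (G : SimpleGraph V) [Fintype G.edgeSet]
  (e : Fin m ≃ G.edgeFinset)

noncomputable def qComplementAdjMatrix : Matrix (V ⊕ Fin m) (V ⊕ Fin m) ℝ :=
  fromBlocks 0 (incMat G e) (incMat G e)ᵀ
    (of (fun _ _ => 1) - 1 - ((incMat G e)ᵀ * incMat G e - (2 : ℝ) • 1))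

theorem det_smul_one_sub_qComplementAdjMatrix_of_ne [DecidableRel G.Adj] {r : ℕ} (hm : 1 ≤ m)
    (hreg : ∀ u w : V, G.Adj u w → G.degree u + G.degree w = r + 2)
    (v : V → V → ℝ) (ν : V → ℝ) (hortho : ∀ i j, v i ⬝ᵥ v j = if i = j then 1 else 0)
    (heig : ∀ i, (incMat G e * (incMat G e)ᵀ) *ᵥ v i = ν i • v i)
    {i₀ : V} (hν₀ : ν i₀ = r + 2) {x : ℝ} (hx₀ : x ≠ 0) (hx₁ : x ≠ 1) (hxν : ∀ i, x + ν i ≠ 0) :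
    (x • 1 - qComplementAdjMatrix G e).det =
      (x - 1) ^ (m - 1) * (x ^ 2 - ((m : ℝ) - r - 1) * x - (r + 2)) *
        ∏ i ∈ Finset.univ.erase i₀, (x + ν i) := by
  rw [qComplementAdjMatrix]
  set B := incMat G e
  set M : Matrix (Fin m) (Fin m) ℝ := (x - 1) • (1 + x⁻¹ • (Bᵀ * B))
  set c : ℝ := (x - 1) * (1 + x⁻¹ * (r + 2))
  have hschur : x • 1 - (of (fun _ _ => (1 : ℝ)) - 1 - (Bᵀ * B - (2 : ℝ) • 1)) - x⁻¹ • (Bᵀ * B)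
      = M - of fun _ _ => 1 := by
    ext i j
    simp only [M, Matrix.sub_apply, Matrix.smul_apply, Matrix.add_apply, one_apply, of_apply,
      smul_eq_mul]
    field_simp
    ring
  have hprod : (x • 1 + B * Bᵀ).det = ∏ i, (x + ν i) :=
    det_eq_prod_of_orthonormal_eigenvectors _ v _ hortho fun i => by
      rw [add_mulVec, smul_mulVec, one_mulVec, heig, add_smul]
  have hdetM : x ^ Fintype.card V * M.det = (x - 1) ^ m * ∏ i, (x + ν i) := by
    rw [det_smul, Fintype.card_fin, mul_left_comm,
      pow_card_mul_det_one_add_inv_smul_transpose_mul hx₀, hprod]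
  have hM1 : M *ᵥ (fun _ => 1) = c • fun _ => 1 := by
    rw [smul_mulVec, add_mulVec, one_mulVec, smul_mulVec,
      transpose_incMat_mul_incMat_mulVec_one G e hreg]
    ext; simp [c]
  have hc : c = (x - 1) * (x + ν i₀) / x := by
    simp only [c, hν₀]; field_simp
  have hc₀ : c ≠ 0 := by
    rw [hc]; exact div_ne_zero (mul_ne_zero (sub_ne_zero.2 hx₁) (hxν i₀)) hx₀
  have hMunit : IsUnit M.det := by
    refine isUnit_iff_ne_zero.2 fun h => ?_
    rw [h, mul_zero, eq_comm] at hdetM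
    exact mul_ne_zero (pow_ne_zero _ (sub_ne_zero.2 hx₁))
      (Finset.prod_ne_zero_iff.2 fun i _ => hxν i) hdetM
  rw [det_smul_one_sub_fromBlocks_zero_s14 hx₀, hschur, det_sub_allOnes_of_mulVec_one hMunit hc₀ hM1, hc,
    ← mul_assoc, hdetM, ← Finset.mul_prod_erase _ _ (Finset.mem_univ i₀), hν₀]
  obtain ⟨k, rfl⟩ := Nat.exists_eq_add_of_le' hm
  have hx₂ : x + (r + 2) ≠ 0 := hν₀ ▸ hxν i₀
  rw [Fintype.card_fin, Nat.add_sub_cancel, pow_succ]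
  field_simp [sub_ne_zero.2 hx₁]
  push_cast
  ring

end QComplement

open Polynomial in
theorem stmt_14_general (n m r : ℕ) (hn : 0 < n) (hm : 1 ≤ m)
    (G : SimpleGraph (Fin n)) [DecidableRel G.Adj] [Fintype G.edgeSet]
    (e : Fin m ≃ G.edgeFinset)
    (hreg : ∀ u w : Fin n, G.Adj u w → G.degree u + G.degree w = r + 2)
    (v : Fin n → Fin n → ℝ) (ν : Fin n → ℝ)
    (hortho : ∀ i j, v i ⬝ᵥ v j = if i = j then 1 else 0)
    (heig : ∀ i, (incMat G e * (incMat G e)ᵀ).mulVec (v i) = ν i • v i)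
    (hν0 : ν ⟨0, hn⟩ = (r : ℝ) + 2)
    (x : ℝ) :
    (x • (1 : Matrix (Fin n ⊕ Fin m) (Fin n ⊕ Fin m) ℝ) -
        Matrix.fromBlocks 0 (incMat G e) (incMat G e)ᵀ
          (Matrix.of (fun _ _ => (1 : ℝ)) - 1 -
            ((incMat G e)ᵀ * incMat G e - (2 : ℝ) • 1))).det
      = (x - 1) ^ (m - 1) *
          (x ^ 2 - ((m : ℝ) - (r : ℝ) - 1) * x - ((r : ℝ) + 2)) *
          ∏ i ∈ Finset.univ.erase (⟨0, hn⟩ : Fin n), (x + ν i) := by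
  set q : ℝ[X] := (X - 1) ^ (m - 1) * (X ^ 2 - C ((m : ℝ) - r - 1) * X - C ((r : ℝ) + 2)) *
    ∏ i ∈ Finset.univ.erase (⟨0, hn⟩ : Fin n), (X + C (ν i))
  have hq : ∀ y, q.eval y = (y - 1) ^ (m - 1) * (y ^ 2 - ((m : ℝ) - r - 1) * y - (r + 2)) *
      ∏ i ∈ Finset.univ.erase (⟨0, hn⟩ : Fin n), (y + ν i) := by
    simp [q, eval_prod]
  rw [← hq]
  refine det_smul_one_sub_eq_eval_of_finite (qComplementAdjMatrix G e) q
    (S := {0, 1} ∪ Set.range (-ν)) (Set.toFinite _) (fun y hy => ?_) x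
  simp only [Set.mem_union, Set.mem_insert_iff, Set.mem_singleton_iff, Set.mem_range, Pi.neg_apply,
    not_or, not_exists] at hy
  obtain ⟨⟨hy₀, hy₁⟩, hyν⟩ := hy
  rw [hq]
  exact det_smul_one_sub_qComplementAdjMatrix_of_ne G e hm hreg v ν hortho heig hν0 hy₀ hy₁
    fun i h => hyν i (by linarith)

/-- `A`-characteristic polynomial of the Q-complemented graph
of a graph `G` whose line graph is `r`-regular (`d(u)+d(v)=r+2` for every edge
`uv`).  The signless Laplacian is $Q(G)=BB^T$, with eigenvalues
`ν 0 = r+2, ν 1, …`. -/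
theorem stmt_14 (n m r : ℕ) (hn : 0 < n) (hm : 1 ≤ m) (hr : 1 ≤ r)
    (G : SimpleGraph (Fin n)) [DecidableRel G.Adj] [Fintype G.edgeSet]
    (e : Fin m ≃ G.edgeFinset)
    (hreg : ∀ u w : Fin n, G.Adj u w → G.degree u + G.degree w = r + 2)
    (v : Fin n → Fin n → ℝ) (ν : Fin n → ℝ)
    (hortho : ∀ i j, v i ⬝ᵥ v j = if i = j then 1 else 0)
    (heig : ∀ i, (incMat G e * (incMat G e)ᵀ).mulVec (v i) = ν i • v i)
    (hν0 : ν ⟨0, hn⟩ = (r : ℝ) + 2)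
    (x : ℝ) :
    (x • (1 : Matrix (Fin n ⊕ Fin m) (Fin n ⊕ Fin m) ℝ) -
        Matrix.fromBlocks 0 (incMat G e) (incMat G e)ᵀ
          (Matrix.of (fun _ _ => (1 : ℝ)) - 1 -
            ((incMat G e)ᵀ * incMat G e - (2 : ℝ) • 1))).det
      = (x - 1) ^ (m - 1) *
          (x ^ 2 - ((m : ℝ) - (r : ℝ) - 1) * x - ((r : ℝ) + 2)) *
          ∏ i ∈ Finset.univ.erase (⟨0, hn⟩ : Fin n), (x + ν i) :=
  stmt_14_general n m r hn hm G e hreg v ν hortho heig hν0 x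
end

section
/- Let p, q ≥ 1 with (p,q) ≠ (1,1). Then the characteristic polynomial of the adjacency matrix of the Q-complemented graph of K_{p,q}, a graph on p+q+pq vertices, equals x·(x−1)^{pq−1}·(x+p)^{q−1}·(x+q)^{p−1}·(x² − (pq−p−q+1)x − (p+q)). -/
open Matrix SimpleGraph

instance (p q : ℕ) : DecidableRel (completeBipartiteGraph (Fin p) (Fin q)).Adj := by
  intro a b; unfold completeBipartiteGraph; dsimp; infer_instance

namespace Matrix

theorem of_one_mul_of_one {R l m n : Type*} [Semiring R] [Fintype m] :
    (of fun _ _ => 1 : Matrix l m R) * (of fun _ _ => 1 : Matrix m n R) =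
      (Fintype.card m : R) • of fun _ _ => 1 := by
  ext
  simp [mul_apply]

theorem smul_one_sub_fromBlocks {R m n : Type*} [Ring R] [DecidableEq m] [DecidableEq n] (x : R)
    (A : Matrix m n R) (B : Matrix n m R) (D : Matrix n n R) :
    x • 1 - fromBlocks 0 A B D = fromBlocks (x • 1) (-A) (-B) (x • 1 - D) := by
  rw [← fromBlocks_one, fromBlocks_smul, sub_eq_add_neg, fromBlocks_neg, fromBlocks_add]
  simp [sub_eq_add_neg]

variable {K : Type*} [Field K] {m n : Type*} [Fintype m] [DecidableEq m] [Fintype n]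
  [DecidableEq n]

theorem det_fromBlocks_swap (A : Matrix m m K) (B : Matrix m n K) (C : Matrix n m K)
    (D : Matrix n n K) : det (fromBlocks A B C D) = det (fromBlocks D C B A) := by
  rw [← fromBlocks_submatrix_sum_swap_sum_swap A B C D]
  exact (det_submatrix_equiv_self (Equiv.sumComm n m) _).symm

theorem det_fromBlocks_smul_one₁₁ {x : K} (hx : x ≠ 0) (B : Matrix m n K) (C : Matrix n m K)
    (D : Matrix n n K) :
    x ^ Fintype.card n * det (fromBlocks (x • 1) B C D) =
      x ^ Fintype.card m * det (x • D - C * B) := by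
  let : Invertible (x • 1 : Matrix m m K) := invertibleOfLeftInverse _ (x⁻¹ • 1) (by simp [hx])
  have hSchur : x • D - C * B = x • (D - C * ⅟(x • 1 : Matrix m m K) * B) := by
    rw [show ⅟(x • 1 : Matrix m m K) = x⁻¹ • 1 from rfl, smul_sub, Matrix.mul_smul,
      Matrix.mul_one, Matrix.smul_mul, smul_smul, mul_inv_cancel₀ hx, one_smul]
  rw [det_fromBlocks₁₁, hSchur, det_smul, det_smul, det_one]
  ring

theorem det_smul_one_add_mul_comm {c : K} (hc : c ≠ 0) (A : Matrix m n K) (B : Matrix n m K) :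
    c ^ Fintype.card n * det (c • 1 + A * B) = c ^ Fintype.card m * det (c • 1 + B * A) := by
  have hAB : c • 1 + A * B = c • (1 + (c⁻¹ • A) * B) := by
    rw [smul_add, Matrix.smul_mul, smul_smul, mul_inv_cancel₀ hc, one_smul]
  have hBA : c • 1 + B * A = c • (1 + B * (c⁻¹ • A)) := by
    rw [smul_add, Matrix.mul_smul, smul_smul, mul_inv_cancel₀ hc, one_smul]
  rw [hAB, hBA, det_smul, det_smul, det_one_add_mul_comm]
  ring

theorem det_smul_one_add_smul_of_one {α : K} (hα : α ≠ 0) (ε : K) :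
    α * det (α • (1 : Matrix n n K) + ε • of fun _ _ => 1) =
      α ^ Fintype.card n * (α + Fintype.card n * ε) := by
  have hrank_one : α • (1 : Matrix n n K) + ε • of (fun _ _ => 1) = α • (1 +
      replicateCol Unit (fun _ : n => ε / α) * replicateRow Unit (fun _ : n => (1 : K))) := by
    ext i j
    simp only [add_apply, smul_apply, one_apply, of_apply, mul_apply, replicateCol_apply,
      replicateRow_apply, Finset.univ_unique, Finset.sum_singleton, mul_one, smul_eq_mul]
    split_ifs <;> field_simp
  rw [hrank_one, det_smul, det_one_add_replicateCol_mul_replicateRow]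
  simp only [dotProduct, one_mul, Finset.sum_const, Finset.card_univ, nsmul_eq_mul]
  field_simp

theorem det_fromBlocks_smul_one_add_smul_of_one {α β : K} (hα : α ≠ 0) (hβ : β ≠ 0)
    (ε γ δ : K) :
    α * β * det (fromBlocks (α • 1 + ε • of fun _ _ => 1) (γ • of fun _ _ => 1)
      (δ • of fun _ _ => 1) (β • 1) : Matrix (m ⊕ n) (m ⊕ n) K) =
      α ^ Fintype.card m * β ^ Fintype.card n *
        ((α + Fintype.card m * ε) * β - Fintype.card m * Fintype.card n * γ * δ) := by
  have hSchur := det_fromBlocks_smul_one₁₁ (m := n) (n := m) hβ (δ • of fun _ _ => (1 : K))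
    (γ • of fun _ _ => 1) (α • 1 + ε • of fun _ _ => (1 : K))
  have hcompl : β • (α • 1 + ε • of fun _ _ => 1) -
      (γ • of fun _ _ => 1 : Matrix m n K) * (δ • of fun _ _ => 1 : Matrix n m K) =
      (β * α) • (1 : Matrix m m K) + (β * ε - γ * δ * Fintype.card n) • of fun _ _ => 1 := by
    rw [Matrix.smul_mul, Matrix.mul_smul, of_one_mul_of_one]
    module
  have hdet := det_smul_one_add_smul_of_one (n := m) (mul_ne_zero hβ hα)
    (β * ε - γ * δ * Fintype.card n)
  rw [hcompl] at hSchur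
  rw [det_fromBlocks_swap]
  apply mul_left_cancel₀ (pow_ne_zero (Fintype.card m) hβ)
  linear_combination (α * β) * hSchur + β ^ Fintype.card n * hdet

end Matrix

def qComplementedAdjMatrix {R n m : Type*} [Ring R] [Fintype n] [Fintype m] [DecidableEq m]
    (B : Matrix n m R) : Matrix (n ⊕ m) (n ⊕ m) R :=
  fromBlocks 0 B Bᵀ (of (fun _ _ => 1) - 1 - (Bᵀ * B - (2 : R) • 1))

theorem det_smul_one_sub_qComplementedAdjMatrix {K n m : Type*} [Field K] [Fintype n]
    [DecidableEq n] [Fintype m] [DecidableEq m] (B : Matrix n m K) (E : Matrix n n K)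
    (hE : Bᵀ * E * B = of fun _ _ => 1) {x : K} (hx0 : x ≠ 0) (hx1 : x ≠ 1) :
    (x - 1) ^ Fintype.card n * det (x • 1 - qComplementedAdjMatrix B) =
      (x - 1) ^ Fintype.card m * det ((x * (x - 1)) • 1 + ((x - 1) • 1 - x • E) * (B * Bᵀ)) := by
  have hSchur := det_fromBlocks_smul_one₁₁ hx0 (-B) (-Bᵀ)
    (x • 1 - (of (fun _ _ => 1) - 1 - (Bᵀ * B - (2 : K) • 1)))
  have hcompl : x • (x • 1 - (of (fun _ _ => 1) - 1 - (Bᵀ * B - (2 : K) • 1))) - -Bᵀ * -B =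
      (x * (x - 1)) • 1 + Bᵀ * (((x - 1) • 1 - x • E) * B) := by
    rw [← hE, Matrix.neg_mul, Matrix.mul_neg, neg_neg, Matrix.sub_mul, Matrix.mul_sub,
      Matrix.smul_mul, Matrix.smul_mul, Matrix.one_mul, Matrix.mul_smul, Matrix.mul_smul,
      Matrix.mul_assoc]
    module
  have hSylvester := det_smul_one_add_mul_comm (mul_ne_zero hx0 (sub_ne_zero.2 hx1)) Bᵀ
    (((x - 1) • 1 - x • E) * B)
  rw [hcompl] at hSchur
  rw [Matrix.mul_assoc, mul_pow, mul_pow] at hSylvester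
  apply mul_left_cancel₀ (pow_ne_zero (Fintype.card m + Fintype.card n) hx0)
  rw [qComplementedAdjMatrix, smul_one_sub_fromBlocks]
  linear_combination x ^ Fintype.card n * (x - 1) ^ Fintype.card n * hSchur +
    x ^ Fintype.card n * hSylvester

def bipartiteIncidence (R : Type*) [Zero R] [One R] (ι κ : Type*) [DecidableEq ι]
    [DecidableEq κ] : Matrix (ι ⊕ κ) (ι × κ) R :=
  fromRows (of fun i e => if e.1 = i then 1 else 0) (of fun k e => if e.2 = k then 1 else 0)

section bipartiteIncidence
variable {ι κ : Type*} [Fintype ι] [Fintype κ] [DecidableEq ι] [DecidableEq κ]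

theorem bipartiteIncidence_mul_transpose {R : Type*} [Semiring R] :
    bipartiteIncidence R ι κ * (bipartiteIncidence R ι κ)ᵀ =
      fromBlocks ((Fintype.card κ : R) • 1) (of fun _ _ => 1) (of fun _ _ => 1)
        ((Fintype.card ι : R) • 1) := by
  rw [bipartiteIncidence, transpose_fromRows, fromRows_mul_fromCols]
  congr 1
  · ext i i'
    by_cases h : i = i' <;> simp [mul_apply, Fintype.sum_prod_type, one_apply, h, Ne.symm]
  · ext; simp [mul_apply, Fintype.sum_prod_type]
  · ext; simp [mul_apply, Fintype.sum_prod_type]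
  · ext k k'
    by_cases h : k = k' <;> simp [mul_apply, Fintype.sum_prod_type, one_apply, h, Ne.symm]

theorem transpose_bipartiteIncidence_mul_fromBlocks_mul {R : Type*} [Semiring R] :
    (bipartiteIncidence R ι κ)ᵀ *
      (fromBlocks 0 (of fun _ _ => 1) 0 0 : Matrix (ι ⊕ κ) (ι ⊕ κ) R) *
      bipartiteIncidence R ι κ = of fun _ _ => 1 := by
  ext
  simp [bipartiteIncidence, mul_apply, Fintype.sum_sum_type]

theorem smul_one_add_mul_bipartiteIncidence_mul_transpose {K : Type*} [Field K] (x : K) :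
    (x * (x - 1)) • 1 + ((x - 1) • 1 - x • fromBlocks 0 (of fun _ _ => 1) 0 0) *
      (bipartiteIncidence K ι κ * (bipartiteIncidence K ι κ)ᵀ) =
    fromBlocks (((x - 1) * (x + Fintype.card κ)) • 1 + (-(x * Fintype.card κ)) • of fun _ _ => 1)
      ((x - 1 - x * Fintype.card ι) • of fun _ _ => 1) ((x - 1) • of fun _ _ => 1)
      (((x - 1) * (x + Fintype.card ι)) • 1) := by
  rw [bipartiteIncidence_mul_transpose]
  ext (i | k) (j | l) <;>
    simp [mul_apply, Fintype.sum_sum_type, one_apply, Finset.sum_ite_eq', Finset.sum_ite_eq] <;>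
    (try split_ifs) <;> ring

end bipartiteIncidence

noncomputable def completeBipartiteEdgeEquiv (p q : ℕ) :
    Fin p × Fin q ≃ (completeBipartiteGraph (Fin p) (Fin q)).edgeFinset :=
  Equiv.ofBijective (fun e => ⟨s(Sum.inl e.1, Sum.inr e.2), by simp⟩) <| by
    constructor
    · rintro ⟨a, b⟩ ⟨a', b'⟩ h
      simpa using h
    · rintro ⟨s, hs⟩
      induction s using Sym2.ind with
      | _ u v =>
        rcases u with a | b <;> rcases v with a' | b' <;> simp at hs
        · exact ⟨(a, b'), rfl⟩
        · exact ⟨(a', b), Subtype.ext Sym2.eq_swap⟩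

theorem incMat_completeBipartiteGraph {p q : ℕ}
    (e : Fin (p * q) ≃ (completeBipartiteGraph (Fin p) (Fin q)).edgeFinset) :
    incMat (completeBipartiteGraph (Fin p) (Fin q)) e =
      (bipartiteIncidence ℝ (Fin p) (Fin q)).submatrix id
        (e.trans (completeBipartiteEdgeEquiv p q).symm) := by
  ext v j
  obtain ⟨⟨a, b⟩, hab⟩ := (completeBipartiteEdgeEquiv p q).surjective (e j)
  have hj : (e.trans (completeBipartiteEdgeEquiv p q).symm) j = (a, b) := by simp [← hab]
  have hej : (e j : Sym2 (Fin p ⊕ Fin q)) = s(Sum.inl a, Sum.inr b) := by rw [← hab]; rfl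
  rw [submatrix_apply, hj, incMat, of_apply, hej]
  rcases v with a' | b' <;> simp [bipartiteIncidence, eq_comm]

section completeBipartite
variable {p q : ℕ} (e : Fin (p * q) ≃ (completeBipartiteGraph (Fin p) (Fin q)).edgeFinset)

theorem incMat_completeBipartiteGraph_mul_transpose :
    incMat (completeBipartiteGraph (Fin p) (Fin q)) e *
        (incMat (completeBipartiteGraph (Fin p) (Fin q)) e)ᵀ =
      bipartiteIncidence ℝ (Fin p) (Fin q) * (bipartiteIncidence ℝ (Fin p) (Fin q))ᵀ := by
  rw [incMat_completeBipartiteGraph, transpose_submatrix, submatrix_mul_equiv, submatrix_id_id]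

theorem transpose_incMat_completeBipartiteGraph_mul_fromBlocks_mul :
    (incMat (completeBipartiteGraph (Fin p) (Fin q)) e)ᵀ *
      (fromBlocks 0 (of fun _ _ => 1) 0 0 : Matrix (Fin p ⊕ Fin q) (Fin p ⊕ Fin q) ℝ) *
      incMat (completeBipartiteGraph (Fin p) (Fin q)) e = of fun _ _ => 1 := by
  rw [incMat_completeBipartiteGraph, transpose_submatrix, ← submatrix_id_id (fromBlocks _ _ _ _),
    ← submatrix_mul _ _ _ _ _ Function.bijective_id,
    ← submatrix_mul _ _ _ _ _ Function.bijective_id,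
    transpose_bipartiteIncidence_mul_fromBlocks_mul]
  rfl

theorem det_smul_one_sub_qComplementedAdjMatrix_completeBipartite_of_ne
    (hp : 1 ≤ p) (hq : 1 ≤ q) {x : ℝ} (hx0 : x ≠ 0) (hx1 : x ≠ 1) (hxp : x + p ≠ 0)
    (hxq : x + q ≠ 0) :
    det (x • 1 - qComplementedAdjMatrix (incMat (completeBipartiteGraph (Fin p) (Fin q)) e)) =
      x * (x - 1) ^ (p * q - 1) * (x + p) ^ (q - 1) * (x + q) ^ (p - 1) *
        (x ^ 2 - (p * q - p - q + 1) * x - (p + q)) := by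
  have hreduce := det_smul_one_sub_qComplementedAdjMatrix _ _
    (transpose_incMat_completeBipartiteGraph_mul_fromBlocks_mul e) hx0 hx1
  rw [incMat_completeBipartiteGraph_mul_transpose,
    smul_one_add_mul_bipartiteIncidence_mul_transpose] at hreduce
  have hblocks := det_fromBlocks_smul_one_add_smul_of_one (m := Fin p) (n := Fin q)
    (mul_ne_zero (sub_ne_zero.2 hx1) hxq) (mul_ne_zero (sub_ne_zero.2 hx1) hxp)
    (-(x * q)) (x - 1 - x * p) (x - 1)
  simp only [Fintype.card_fin] at hblocks
  rw [Fintype.card_sum, Fintype.card_fin, Fintype.card_fin, Fintype.card_fin] at hreduce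
  obtain ⟨p, rfl⟩ := Nat.exists_eq_add_of_le' hp
  obtain ⟨q, rfl⟩ := Nat.exists_eq_add_of_le' hq
  rw [show (p + 1) * (q + 1) - 1 = p * q + p + q by ring_nf; omega, Nat.add_sub_cancel,
    Nat.add_sub_cancel]
  push_cast at hreduce hblocks ⊢
  have hα : (x - 1) * (x + (q + 1)) ≠ 0 := by exact_mod_cast mul_ne_zero (sub_ne_zero.2 hx1) hxq
  have hβ : (x - 1) * (x + (p + 1)) ≠ 0 := by exact_mod_cast mul_ne_zero (sub_ne_zero.2 hx1) hxp
  rw [mul_pow, mul_pow] at hblocks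
  apply mul_left_cancel₀
    (mul_ne_zero (mul_ne_zero (pow_ne_zero (p + 1 + (q + 1)) (sub_ne_zero.2 hx1)) hα) hβ)
  -- the last factor of `hblocks` is `x * (x - 1) * (x ^ 2 - (p * q - p - q + 1) * x - (p + q))`
  linear_combination ((x - 1) * (x + (q + 1))) * ((x - 1) * (x + (p + 1))) * hreduce +
    (x - 1) ^ ((p + 1) * (q + 1)) * hblocks

end completeBipartite

theorem stmt_15_general (p q : ℕ) (hp : 1 ≤ p) (hq : 1 ≤ q)
    (e : Fin (p * q) ≃ (completeBipartiteGraph (Fin p) (Fin q)).edgeFinset)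
    (x : ℝ) :
    (x • (1 : Matrix ((Fin p ⊕ Fin q) ⊕ Fin (p * q)) ((Fin p ⊕ Fin q) ⊕ Fin (p * q)) ℝ) -
        Matrix.fromBlocks 0 (incMat (completeBipartiteGraph (Fin p) (Fin q)) e)
          (incMat (completeBipartiteGraph (Fin p) (Fin q)) e)ᵀ
          (Matrix.of (fun _ _ => (1 : ℝ)) - 1 -
            ((incMat (completeBipartiteGraph (Fin p) (Fin q)) e)ᵀ *
              incMat (completeBipartiteGraph (Fin p) (Fin q)) e - (2 : ℝ) • 1))).det
      = x * (x - 1) ^ (p * q - 1) * (x + (p : ℝ)) ^ (q - 1) * (x + (q : ℝ)) ^ (p - 1) *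
          (x ^ 2 - ((p : ℝ) * (q : ℝ) - (p : ℝ) - (q : ℝ) + 1) * x -
            ((p : ℝ) + (q : ℝ))) := by
  have hdense : Dense ({0, 1, -(p : ℝ), -(q : ℝ)}ᶜ : Set ℝ) :=
    (Set.toFinite _).countable.dense_compl ℝ
  have hpoly : (fun y : ℝ => det (y • 1 -
        qComplementedAdjMatrix (incMat (completeBipartiteGraph (Fin p) (Fin q)) e))) =
      fun y : ℝ => y * (y - 1) ^ (p * q - 1) * (y + p) ^ (q - 1) * (y + q) ^ (p - 1) *
        (y ^ 2 - (p * q - p - q + 1) * y - (p + q)) := by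
    refine Continuous.ext_on hdense (by fun_prop) (by fun_prop) fun y hy => ?_
    simp only [Set.mem_compl_iff, Set.mem_insert_iff, Set.mem_singleton_iff, not_or,
      ← add_eq_zero_iff_eq_neg] at hy
    exact det_smul_one_sub_qComplementedAdjMatrix_completeBipartite_of_ne e hp hq hy.1 hy.2.1
      hy.2.2.1 hy.2.2.2
  exact congrFun hpoly x

/-- `A`-characteristic polynomial of the Q-complemented graph
of $K_{p,q}$. -/
theorem stmt_15 (p q : ℕ) (hp : 1 ≤ p) (hq : 1 ≤ q) (hpq : ¬(p = 1 ∧ q = 1))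
    (e : Fin (p * q) ≃ (completeBipartiteGraph (Fin p) (Fin q)).edgeFinset)
    (x : ℝ) :
    (x • (1 : Matrix ((Fin p ⊕ Fin q) ⊕ Fin (p * q)) ((Fin p ⊕ Fin q) ⊕ Fin (p * q)) ℝ) -
        Matrix.fromBlocks 0 (incMat (completeBipartiteGraph (Fin p) (Fin q)) e)
          (incMat (completeBipartiteGraph (Fin p) (Fin q)) e)ᵀ
          (Matrix.of (fun _ _ => (1 : ℝ)) - 1 -
            ((incMat (completeBipartiteGraph (Fin p) (Fin q)) e)ᵀ *
              incMat (completeBipartiteGraph (Fin p) (Fin q)) e - (2 : ℝ) • 1))).det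
      = x * (x - 1) ^ (p * q - 1) * (x + (p : ℝ)) ^ (q - 1) * (x + (q : ℝ)) ^ (p - 1) *
          (x ^ 2 - ((p : ℝ) * (q : ℝ) - (p : ℝ) - (q : ℝ) + 1) * x -
            ((p : ℝ) + (q : ℝ))) :=
  stmt_15_general p q hp hq e x
end

section
/- Let G be a graph with n vertices and m ≥ 1 edges, and let A be the adjacency matrix of the complete subdivision graph of G, i.e., the block matrix [[0_{n×n}, B(G)],[B(G)ᵀ, J_m − I_m]]. Then for every real x such that (x²+x−2)·I_m − A(𝓛(G)) is invertible, (x+1)^n · det(x·I_{n+m} − A) = (x+1)^m · ( 1 − x·χ_{𝓛(G)}(x²+x−2) ) · 𝒬_G(x²+x). -/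
/-!
The identity only uses the block shape of the matrix, so it is proved for an arbitrary matrix
`B`. For `x ≠ 0`, the Schur complement of the corner `x • 1` gives
`x ^ m * det (x • 1 - A) = x ^ n * det (N - x • J)` with `N = (x ^ 2 + x) • 1 - Bᵀ * B` and `J`
the all-ones matrix. The matrix determinant lemma turns `det (N - x • J)` into
`det N * (1 - x * χ)`, where `χ` is the sum of the entries of `N⁻¹`, and Sylvester's identity
`y ^ n * det (y • 1 - Bᵀ * B) = y ^ m * det (y • 1 - B * Bᵀ)` at `y = x ^ 2 + x` trades `det N`
for the signless Laplacian characteristic polynomial. At `x = 0` the hypothesis says that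
`Bᵀ * B` is invertible, and an explicit block factorisation gives `det (-A) = det (-(B * Bᵀ))`.
-/

open Matrix SimpleGraph

namespace Matrix

section CommRing

variable {R : Type*} [CommRing R] {ι κ : Type*} [Fintype ι] [Fintype κ] [DecidableEq ι]
  [DecidableEq κ]

theorem pow_card_mul_det_smul_one_sub_mul_comm (A : Matrix ι κ R) (C : Matrix κ ι R) (y : R) :
    y ^ Fintype.card κ * (y • 1 - A * C).det = y ^ Fintype.card ι * (y • 1 - C * A).det := by
  have h := congrArg (Polynomial.eval y) (charpoly_mul_comm' A C)
  simpa only [Polynomial.eval_mul, Polynomial.eval_pow, Polynomial.eval_X, eval_charpoly,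
    smul_one_eq_diagonal, scalar_apply] using h

theorem det_sub_smul_allOnes {N : Matrix ι ι R} (hN : IsUnit N.det) (c : R) :
    (N - c • of fun _ _ => (1 : R)).det = N.det * (1 - c * ∑ i, ∑ j, N⁻¹ i j) := by
  have hrank_one : N - c • of (fun _ _ => (1 : R)) =
      N + replicateCol Unit (fun _ => (1 : R)) * replicateRow Unit (fun _ => -c) := by
    ext i j
    simp [sub_eq_add_neg, mul_apply]
  rw [hrank_one, det_add_replicateCol_mul_replicateRow hN]
  simp only [det_unique, PUnit.default_eq_unit, add_apply, one_apply_eq, mul_apply,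
    replicateRow_apply, replicateCol_apply, neg_mul, mul_one, Finset.sum_neg_distrib,
    Finset.mul_sum]
  rw [Finset.sum_comm, ← sub_eq_add_neg]

theorem det_fromBlocks_zero₁₁_of_isUnit_det_mul (B : Matrix ι κ R) (C : Matrix κ ι R)
    (D : Matrix κ κ R) (hCB : IsUnit (C * B).det) :
    (fromBlocks 0 B C D).det = (-(B * C)).det := by
  have hfactor : fromBlocks 0 B C D * fromBlocks 1 (B * (C * B)⁻¹) (-C) 0 =
      fromBlocks (-(B * C)) 0 (C - D * C) 1 := by
    rw [fromBlocks_multiply]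
    congr 1 <;> simp [← Matrix.mul_assoc, mul_nonsing_inv _ hCB, sub_eq_add_neg]
  have hdet := congrArg det hfactor
  rwa [det_mul, det_fromBlocks_one₁₁, det_fromBlocks_zero₁₂, zero_sub, Matrix.neg_mul,
    neg_neg, ← Matrix.mul_assoc, mul_nonsing_inv _ hCB, det_one, mul_one, mul_one] at hdet

end CommRing

section Field

variable {K : Type*} [Field K] {ι κ : Type*} [Fintype ι] [Fintype κ] [DecidableEq ι]
  [DecidableEq κ]

theorem pow_card_mul_det_smul_one_sub_fromBlocks_zero₁₁ (B : Matrix ι κ K) (C : Matrix κ ι K)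
    (D : Matrix κ κ K) {x : K} (hx : x ≠ 0) :
    x ^ Fintype.card κ * (x • 1 - fromBlocks 0 B C D).det =
      x ^ Fintype.card ι * (x • (x • 1 - D) - C * B).det := by
  let : Invertible (x • (1 : Matrix ι ι K)) :=
    ⟨x⁻¹ • 1, by simp [smul_smul, hx], by simp [smul_smul, hx]⟩
  have hinvOf : ⅟(x • (1 : Matrix ι ι K)) = x⁻¹ • 1 := rfl
  have hblocks : x • 1 - fromBlocks 0 B C D = fromBlocks (x • 1) (-B) (-C) (x • 1 - D) := by
    rw [← fromBlocks_one, fromBlocks_smul, sub_eq_add_neg, fromBlocks_neg, fromBlocks_add]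
    simp [sub_eq_add_neg]
  have hschur :
      x • (x • 1 - D - -C * ⅟(x • (1 : Matrix ι ι K)) * -B) = x • (x • 1 - D) - C * B := by
    simp [hinvOf, smul_sub, smul_smul, hx]
  rw [hblocks, det_fromBlocks₁₁, det_smul, det_one, mul_one, mul_left_comm, ← det_smul, hschur]

end Field

end Matrix

section CompleteSubdivision

open Matrix

variable {K : Type*} [Field K] {ι κ : Type*} [Fintype ι] [Fintype κ] [DecidableEq ι]
  [DecidableEq κ]

def completeSubdivisionAdjMatrix {R : Type*} [Ring R] (B : Matrix ι κ R) :
    Matrix (ι ⊕ κ) (ι ⊕ κ) R :=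
  fromBlocks 0 B Bᵀ (of (fun _ _ => 1) - 1)

theorem det_neg_completeSubdivisionAdjMatrix {R : Type*} [CommRing R] (B : Matrix ι κ R)
    (hB : IsUnit (Bᵀ * B).det) :
    (-completeSubdivisionAdjMatrix B).det = (-(B * Bᵀ)).det := by
  have hblocks :
      -completeSubdivisionAdjMatrix B = fromBlocks 0 (-B) (-Bᵀ) (1 - of fun _ _ => 1) := by
    simp [completeSubdivisionAdjMatrix, fromBlocks_neg]
  rw [hblocks, det_fromBlocks_zero₁₁_of_isUnit_det_mul _ _ _ (by simpa using hB)]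
  simp

theorem pow_card_mul_det_smul_one_sub_completeSubdivisionAdjMatrix (B : Matrix ι κ K) (x : K)
    (hN : IsUnit ((x ^ 2 + x) • 1 - Bᵀ * B).det) :
    (x + 1) ^ Fintype.card ι * (x • 1 - completeSubdivisionAdjMatrix B).det =
      (x + 1) ^ Fintype.card κ *
          (1 - x * ∑ i, ∑ j, ((x ^ 2 + x) • (1 : Matrix κ κ K) - Bᵀ * B)⁻¹ i j) *
        ((x ^ 2 + x) • 1 - B * Bᵀ).det := by
  rcases eq_or_ne x 0 with rfl | hx
  · have hB : IsUnit (Bᵀ * B).det := by simpa [det_neg] using hN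
    simpa using det_neg_completeSubdivisionAdjMatrix B hB
  set N : Matrix κ κ K := (x ^ 2 + x) • 1 - Bᵀ * B
  set χ := ∑ i, ∑ j, N⁻¹ i j
  have hcompl : x • (x • 1 - (of (fun _ _ => 1) - 1)) - Bᵀ * B = N - x • of fun _ _ => 1 := by
    simp only [N]; module
  apply mul_left_cancel₀ (pow_ne_zero (Fintype.card κ) hx)
  have hfactor : x ^ 2 + x = x * (x + 1) := by ring
  calc x ^ Fintype.card κ *
        ((x + 1) ^ Fintype.card ι * (x • 1 - completeSubdivisionAdjMatrix B).det)
      = (x ^ 2 + x) ^ Fintype.card ι * (N - x • of fun _ _ => 1).det := by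
        rw [mul_left_comm, completeSubdivisionAdjMatrix,
          pow_card_mul_det_smul_one_sub_fromBlocks_zero₁₁ _ _ _ hx, hcompl, hfactor, mul_pow]
        ring
    _ = (x ^ 2 + x) ^ Fintype.card ι * N.det * (1 - x * χ) := by
        rw [det_sub_smul_allOnes hN]; ring
    _ = (x ^ 2 + x) ^ Fintype.card κ * ((x ^ 2 + x) • 1 - B * Bᵀ).det * (1 - x * χ) := by
        rw [← pow_card_mul_det_smul_one_sub_mul_comm]
    _ = _ := by rw [hfactor, mul_pow]; ring

end CompleteSubdivision

theorem stmt_16_general (n m : ℕ)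
    (G : SimpleGraph (Fin n)) [Fintype G.edgeSet]
    (e : Fin m ≃ G.edgeFinset)
    (x : ℝ)
    (hinv : IsUnit ((x ^ 2 + x - 2) • (1 : Matrix (Fin m) (Fin m) ℝ) -
      ((incMat G e)ᵀ * incMat G e - (2 : ℝ) • 1))) :
    (x + 1) ^ n *
        (x • (1 : Matrix (Fin n ⊕ Fin m) (Fin n ⊕ Fin m) ℝ) -
          Matrix.fromBlocks 0 (incMat G e) (incMat G e)ᵀ
            (Matrix.of (fun _ _ => (1 : ℝ)) - 1)).det
      = (x + 1) ^ m *
          (1 - x * coronal ((incMat G e)ᵀ * incMat G e - (2 : ℝ) • 1) (x ^ 2 + x - 2)) *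
          ((x ^ 2 + x) • (1 : Matrix (Fin n) (Fin n) ℝ) -
            incMat G e * (incMat G e)ᵀ).det := by
  have hN : (x ^ 2 + x - 2) • (1 : Matrix (Fin m) (Fin m) ℝ) -
      ((incMat G e)ᵀ * incMat G e - (2 : ℝ) • 1) =
        (x ^ 2 + x) • 1 - (incMat G e)ᵀ * incMat G e := by
    module
  rw [hN, isUnit_iff_isUnit_det] at hinv
  have h := pow_card_mul_det_smul_one_sub_completeSubdivisionAdjMatrix (incMat G e) x hinv
  rw [Fintype.card_fin, Fintype.card_fin] at h
  rw [coronal, hN]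
  exact h

/-- `A`-characteristic polynomial of the complete subdivision
graph of `G`, at points `x` where the relevant matrix is invertible.  Here
$A(\mathcal L(G)) = B^TB-2I$ and $Q(G)=BB^T$. -/
theorem stmt_16 (n m : ℕ) (hm : 1 ≤ m)
    (G : SimpleGraph (Fin n)) [DecidableRel G.Adj] [Fintype G.edgeSet]
    (e : Fin m ≃ G.edgeFinset)
    (x : ℝ)
    (hinv : IsUnit ((x ^ 2 + x - 2) • (1 : Matrix (Fin m) (Fin m) ℝ) -
      ((incMat G e)ᵀ * incMat G e - (2 : ℝ) • 1))) :
    (x + 1) ^ n *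
        (x • (1 : Matrix (Fin n ⊕ Fin m) (Fin n ⊕ Fin m) ℝ) -
          Matrix.fromBlocks 0 (incMat G e) (incMat G e)ᵀ
            (Matrix.of (fun _ _ => (1 : ℝ)) - 1)).det
      = (x + 1) ^ m *
          (1 - x * coronal ((incMat G e)ᵀ * incMat G e - (2 : ℝ) • 1) (x ^ 2 + x - 2)) *
          ((x ^ 2 + x) • (1 : Matrix (Fin n) (Fin n) ℝ) -
            incMat G e * (incMat G e)ᵀ).det :=
  stmt_16_general n m G e x hinv
end
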